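/- arXiv:1311.6013 — 2 statements merged into one kernel-verified Lean document; each statement's English description precedes it below -/
import Mathlib

section
/- Let ι be a finite type, k ≥ 1 a natural number with k ≤ card ι, and f : Finset ι → ℝ a normalized, monotone, submodular set function. Let G : ℕ → Finset ι be a greedy chain for f: G 0 = ∅ and for each t < k there exists a_t ∉ G t with G (t+1) = G t ∪ {a_t} and f(G t ∪ {a_t}) ≥ f(G t ∪ {b}) for every b ∉ G t. Then for every Finset A ⊆ ι with card A ≤ k, f(G k) ≥ (1 − Real.exp (−1)) · f(A). In particular, the greedy solution achieves at least a (1 − 1/e) fraction of the optimal value max{f(A) : |A| ≤ k}. -/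
/-- The Nemhauser–Wolsey–Fisher `(1 − 1/e)` approximation guarantee for the greedy
algorithm maximizing a normalized monotone submodular function under a
cardinality constraint `k`. -/
theorem stmt_10 {ι : Type*} [Fintype ι] [DecidableEq ι] (k : ℕ) (hk1 : 1 ≤ k)
    (hkcard : k ≤ Fintype.card ι)
    (f : Finset ι → ℝ)
    (hnorm : f ∅ = 0)
    (hmono : ∀ A B : Finset ι, A ⊆ B → f A ≤ f B)
    (hsub : ∀ L H : Finset ι, L ⊆ H → ∀ a ∉ H,
      f (H ∪ {a}) - f H ≤ f (L ∪ {a}) - f L)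
    (G : ℕ → Finset ι) (hG0 : G 0 = ∅)
    (hGreedy : ∀ t < k, ∃ a ∉ G t, G (t + 1) = G t ∪ {a} ∧
      ∀ b ∉ G t, f (G t ∪ {b}) ≤ f (G t ∪ {a})) :
    ∀ A : Finset ι, A.card ≤ k → (1 - Real.exp (-1)) * f A ≤ f (G k) := by
  intro A hA
  have hfA0 : 0 ≤ f A := hnorm ▸ hmono ∅ A (Finset.empty_subset A)
  have hkpos : (0:ℝ) < (k:ℝ) := by exact_mod_cast hk1
  -- telescoping
  have tele : ∀ (S B : Finset ι), f (S ∪ B) - f S ≤ ∑ b ∈ B, (f (S ∪ {b}) - f S) := by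
    intro S B
    induction B using Finset.induction with
    | empty => simp
    | @insert b B hb ih =>
      rw [Finset.sum_insert hb]
      have h1 : f (S ∪ insert b B) - f (S ∪ B) ≤ f (S ∪ {b}) - f S := by
        by_cases hbS : b ∈ S ∪ B
        · rw [Finset.union_insert, Finset.insert_eq_self.mpr hbS]
          have := hmono S (S ∪ {b}) Finset.subset_union_left
          linarith
        · have h := hsub S (S ∪ B) Finset.subset_union_left b hbS
          rw [show insert b B = B ∪ {b} from by rw [Finset.insert_eq, Finset.union_comm]]
          rwa [Finset.union_assoc] at h
      linarith
  -- main step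
  have step : ∀ t < k, f A - f (G t) ≤ (k:ℝ) * (f (G (t+1)) - f (G t)) := by
    intro t ht
    obtain ⟨a, ha, hG1, hmax⟩ := hGreedy t ht
    have hgain0 : 0 ≤ f (G (t+1)) - f (G t) := by
      rw [hG1]
      have := hmono (G t) (G t ∪ {a}) Finset.subset_union_left
      linarith
    have hterm : ∀ b ∈ A, f (G t ∪ {b}) - f (G t) ≤ f (G (t+1)) - f (G t) := by
      intro b _
      by_cases hb : b ∈ G t
      · rw [Finset.union_eq_left.mpr (Finset.singleton_subset_iff.mpr hb)]
        linarith
      · rw [hG1]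
        have := hmax b hb
        linarith
    have hsum : ∑ b ∈ A, (f (G t ∪ {b}) - f (G t)) ≤ (A.card : ℝ) * (f (G (t+1)) - f (G t)) := by
      calc ∑ b ∈ A, (f (G t ∪ {b}) - f (G t))
          ≤ ∑ _b ∈ A, (f (G (t+1)) - f (G t)) := Finset.sum_le_sum hterm
        _ = (A.card : ℝ) * (f (G (t+1)) - f (G t)) := by
            rw [Finset.sum_const, nsmul_eq_mul]
    have hcard : (A.card : ℝ) ≤ (k:ℝ) := by exact_mod_cast hA
    have h1 : f A ≤ f (G t ∪ A) := hmono A (G t ∪ A) Finset.subset_union_right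
    have h2 := tele (G t) A
    have h3 : (A.card : ℝ) * (f (G (t+1)) - f (G t)) ≤ (k:ℝ) * (f (G (t+1)) - f (G t)) :=
      mul_le_mul_of_nonneg_right hcard hgain0
    linarith
  -- induction
  have hr0 : (0:ℝ) ≤ 1 - 1/(k:ℝ) := by
    have : 1/(k:ℝ) ≤ 1 := by
      rw [div_le_one hkpos]; exact_mod_cast hk1
    linarith
  have key : ∀ t ≤ k, f A - f (G t) ≤ (1 - 1/(k:ℝ))^t * f A := by
    intro t
    induction t with
    | zero => intro _; rw [hG0, hnorm]; simp
    | succ t ih =>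
      intro ht
      have ht' : t < k := ht
      have ihh := ih (le_of_lt ht')
      have hs := step t ht'
      have hgain : f A - f (G t) ≤ (k:ℝ) * (f (G (t+1)) - f (G t)) := hs
      have : f A - f (G (t+1)) ≤ (1 - 1/(k:ℝ)) * (f A - f (G t)) := by
        have hdiv : (f A - f (G t)) / (k:ℝ) ≤ f (G (t+1)) - f (G t) := by
          rw [div_le_iff₀ hkpos]
          linarith [hgain, mul_comm (k:ℝ) (f (G (t+1)) - f (G t))]
        have hring : (1 - 1/(k:ℝ)) * (f A - f (G t))
            = (f A - f (G t)) - (f A - f (G t)) / (k:ℝ) := by ring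
        linarith
      calc f A - f (G (t+1)) ≤ (1 - 1/(k:ℝ)) * (f A - f (G t)) := this
        _ ≤ (1 - 1/(k:ℝ)) * ((1 - 1/(k:ℝ))^t * f A) := mul_le_mul_of_nonneg_left ihh hr0
        _ = (1 - 1/(k:ℝ))^(t+1) * f A := by ring
  have hkk := key k le_rfl
  -- (1 - 1/k)^k ≤ exp (-1)
  have hexp : (1 - 1/(k:ℝ))^k ≤ Real.exp (-1) := by
    have h1 : 1 - 1/(k:ℝ) ≤ Real.exp (-(1/(k:ℝ))) := by
      have := Real.add_one_le_exp (-(1/(k:ℝ)))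
      linarith
    calc (1 - 1/(k:ℝ))^k ≤ (Real.exp (-(1/(k:ℝ))))^k := pow_le_pow_left₀ hr0 h1 k
      _ = Real.exp ((k:ℝ) * (-(1/(k:ℝ)))) := by rw [← Real.exp_nat_mul]
      _ = Real.exp (-1) := by
          congr 1
          field_simp
  have : (1 - 1/(k:ℝ))^k * f A ≤ Real.exp (-1) * f A :=
    mul_le_mul_of_nonneg_right hexp hfA0
  linarith
end

section
/- Let ι be a type and f : Finset ι → ℝ a monotone submodular set function. Then for all Finsets S and A of ι, f(A) ≤ f(S) + Σ_{a ∈ A \ S} (f(S ∪ {a}) − f(S)). -/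
/-- For a monotone submodular set function, the value of any set `A` is bounded by
the value of `S` plus the sum of the individual marginal gains of the elements of
`A \ S` over `S`. -/
theorem stmt_11 {ι : Type*} [DecidableEq ι] (f : Finset ι → ℝ)
    (hmono : ∀ A B : Finset ι, A ⊆ B → f A ≤ f B)
    (hsub : ∀ L H : Finset ι, L ⊆ H → ∀ a ∉ H,
      f (H ∪ {a}) - f H ≤ f (L ∪ {a}) - f L) :
    ∀ S A : Finset ι, f A ≤ f S + ∑ a ∈ A \ S, (f (S ∪ {a}) - f S) := by
  intro S A
  have key : ∀ T : Finset ι, Disjoint T S →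
      f (S ∪ T) ≤ f S + ∑ a ∈ T, (f (S ∪ {a}) - f S) := by
    intro T
    induction T using Finset.induction_on with
    | empty => intro _; simp
    | @insert a T ha ih =>
      intro hd
      have hdT : Disjoint T S := (Finset.disjoint_insert_left.mp hd).2
      have haS : a ∉ S := (Finset.disjoint_insert_left.mp hd).1
      have haST : a ∉ S ∪ T := by simp [haS, ha]
      have h1 := hsub S (S ∪ T) Finset.subset_union_left a haST
      have h2 := ih hdT
      have : S ∪ insert a T = (S ∪ T) ∪ {a} := by
        ext x; simp
      rw [this, Finset.sum_insert ha]
      linarith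
  calc f A ≤ f (S ∪ (A \ S)) := by
        apply hmono
        intro x hx
        by_cases h : x ∈ S <;> simp [h, hx]
    _ ≤ f S + ∑ a ∈ A \ S, (f (S ∪ {a}) - f S) :=
        key _ (Finset.sdiff_disjoint)
end
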